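/- arXiv:2406.12610 — 2 statements merged into one kernel-verified Lean document; each statement's English description precedes it below -/
import Mathlib

section
/- If α and σ are inversion sequences with H(α) ∩ H(σ) ≠ ∅, then α = σ. -/
/-- Entry of the word `w` at (1-based) position `i`. -/
def ent (w : List ℕ) (i : ℕ) : ℕ := w.getD (i - 1) 0

/-- `w` is an endofunction of `{1,…,n}`, where `n = w.length`. -/
def IsEndo (w : List ℕ) : Prop := ∀ x ∈ w, 1 ≤ x ∧ x ≤ w.length

/-- `w` is an inversion sequence. -/
def IsInvSeq (w : List ℕ) : Prop :=
  ∀ i ∈ Finset.Icc 1 w.length, 1 ≤ ent w i ∧ ent w i ≤ i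

/-- The set of `d`-ascents of `w` (1-based positions): position `1` is always a
`d`-ascent, and `i ≥ 2` is a `d`-ascent if `a_i > a_{i-1} - d`. -/
def ascSet (d : ℕ) (w : List ℕ) : Finset ℕ :=
  (Finset.Icc 1 w.length).filter fun i => i = 1 ∨ ent w (i - 1) < ent w i + d

/-- The number of `d`-ascents of `w`. -/
def ascCard (d : ℕ) (w : List ℕ) : ℕ := (ascSet d w).card

/-- `w` is a `d`-ascent sequence. -/
def IsDAscSeq (d : ℕ) (w : List ℕ) : Prop :=
  IsEndo w ∧ ∀ i ∈ Finset.Icc 1 w.length, ent w i ≤ 1 + ascCard d (w.take (i - 1))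

/-- One step of the map `M`: add one to every entry strictly to the left of
position `j` that is weakly larger than the entry in position `j`. -/
def Mstep (w : List ℕ) (j : ℕ) : List ℕ :=
  w.mapIdx fun k x => if k + 1 < j ∧ ent w j ≤ x then x + 1 else x

/-- The `d`-hat map: apply `Mstep` successively at the `d`-ascents of `w`,
listed in increasing order. -/
def hatd (d : ℕ) (w : List ℕ) : List ℕ :=
  ((ascSet d w).sort (· ≤ ·)).foldl Mstep w

/-- Largest entry of `w`. -/
def maxEnt (w : List ℕ) : ℕ := w.foldr max 0

/-- `w` is a Cayley permutation: its image is `{1,…,max w}`. -/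
def IsCayley (w : List ℕ) : Prop := ∀ x, x ∈ w ↔ (1 ≤ x ∧ x ≤ maxEnt w)

open Classical in
/-- The set of positions of leftmost copies of the values of `w`. -/
noncomputable def nubSet (w : List ℕ) : Finset ℕ :=
  (Finset.Icc 1 w.length).filter fun i =>
    ∀ j ∈ Finset.Icc 1 w.length, ent w j = ent w i → i ≤ j

/-- The least `d` such that `w` is a `d`-ascent sequence. -/
noncomputable def mind (w : List ℕ) : ℕ := sInf {d | IsDAscSeq d w}

/-- The set `H(w)` of all the (meaningful) `d`-hats of `w`. -/
def Hset (w : List ℕ) : Set (List ℕ) := {x | ∃ d, mind w ≤ d ∧ x = hatd d w}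

/-- The max-hat map. -/
def hatmax (w : List ℕ) : List ℕ := hatd (w.length - 1) w

/-- Weak descent set of `w`. -/
def wDesSet (w : List ℕ) : Finset ℕ :=
  (Finset.Icc 2 w.length).filter fun i => ent w i ≤ ent w (i - 1)

/-- The number of weak descents of `w`. -/
def wdes (w : List ℕ) : ℕ := (wDesSet w).card

/-- `i` is a right-left minimum index of `w`. -/
def IsRLMinIdx (w : List ℕ) (i : ℕ) : Prop :=
  1 ≤ i ∧ i ≤ w.length ∧ ∀ j, i < j → j ≤ w.length → ent w i < ent w j

/-- The set of right-left minima pairs of `w`. -/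
def rlMinP (w : List ℕ) : Set (ℕ × ℕ) :=
  {p | IsRLMinIdx w p.1 ∧ p.2 = ent w p.1}

/-- `w` is the word of a permutation of `{1,…,n}`, where `n = w.length`. -/
def IsPermWord (w : List ℕ) : Prop :=
  w.Nodup ∧ ∀ x ∈ w, 1 ≤ x ∧ x ≤ w.length

/-- Add one to every entry of `w` that is `≥ a`. -/
def plus (w : List ℕ) (a : ℕ) : List ℕ :=
  w.map fun x => if a ≤ x then x + 1 else x

/-- Add one to every entry of `w` that is `≥ a`, then append `a` at the end. -/
def plusApp (w : List ℕ) (a : ℕ) : List ℕ := plus w a ++ [a]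

/-- The index of the maximal increasing run of `w` containing position `i`:
one plus the number of descents up to position `i`. -/
def irIdx (w : List ℕ) (i : ℕ) : ℕ :=
  1 + ((Finset.Icc 2 i).filter fun j => ent w j < ent w (j - 1)).card

/-- `w` is ir-subdiagonal: every entry `c` in the `i`th maximal increasing run
satisfies `c ≤ n + 1 - i`. -/
def IsIrSub (w : List ℕ) : Prop :=
  ∀ i ∈ Finset.Icc 1 w.length, ent w i + irIdx w i ≤ w.length + 1

/-- The index of the maximal decreasing run of `w` containing position `i`. -/
def drIdx (w : List ℕ) (i : ℕ) : ℕ :=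
  1 + ((Finset.Icc 2 i).filter fun j => ent w (j - 1) < ent w j).card

/-- `w` is dr-subdiagonal: every entry `c` in the `i`th maximal decreasing run
satisfies `c ≤ n + 1 - i`. -/
def IsDrSub (w : List ℕ) : Prop :=
  ∀ i ∈ Finset.Icc 1 w.length, ent w i + drIdx w i ≤ w.length + 1

/-- `w` is a weak descent sequence. -/
def IsWDesSeq (w : List ℕ) : Prop :=
  IsInvSeq w ∧ ∀ i ∈ Finset.Icc 1 w.length, ent w i ≤ 1 + wdes (w.take (i - 1))

/-- `w` is a primitive ascent sequence: an ascent sequence with no flat steps. -/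
def IsPrimAscSeq (w : List ℕ) : Prop :=
  IsDAscSeq 0 w ∧ ∀ i ∈ Finset.Icc 1 (w.length - 1), ent w i ≠ ent w (i + 1)

/-- Insert position `i` into a list of positions sorted by the Burge order:
ascending entries, ties broken by descending position. -/
def bInsert (w : List ℕ) (i : ℕ) : List ℕ → List ℕ
  | [] => [i]
  | j :: t =>
      if ent w i < ent w j ∨ (ent w i = ent w j ∧ j ≤ i) then i :: j :: t
      else j :: bInsert w i t

/-- The permutation `burget w` obtained from the Burge transpose of the biword
with top row `1,…,n` and bottom row `w`: sort the positions `1,…,n` in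
ascending order of their entries, breaking ties in descending order of
position. -/
def burget (w : List ℕ) : List ℕ :=
  ((List.range w.length).map (· + 1)).foldr (bInsert w) []


lemma ent_append (w : List ℕ) (c i : ℕ) (h1 : 1 ≤ i) (h2 : i ≤ w.length) :
    ent (w ++ [c]) i = ent w i := List.getD_append _ _ _ _ (by omega)

lemma ent_append_last (w : List ℕ) (c : ℕ) : ent (w ++ [c]) (w.length + 1) = c := by
  show (w ++ [c]).getD (w.length + 1 - 1) 0 = c
  rw [Nat.add_sub_cancel, List.getD_append_right _ _ _ _ le_rfl]
  simp

lemma Mstep_length (w : List ℕ) (j : ℕ) : (Mstep w j).length = w.length := by simp [Mstep]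

lemma Mstep_append (w : List ℕ) (c j : ℕ) (h1 : 1 ≤ j) (h2 : j ≤ w.length) :
    Mstep (w ++ [c]) j = Mstep w j ++ [c] := by
  unfold Mstep
  rw [List.mapIdx_append_one]
  simp only [ent_append w c j h1 h2]
  congr 1
  have : ¬ (w.length + 1 < j) := by omega
  simp [this]

lemma mem_ascSet (d : ℕ) (w : List ℕ) (i : ℕ) :
    i ∈ ascSet d w ↔ 1 ≤ i ∧ i ≤ w.length ∧ (i = 1 ∨ ent w (i - 1) < ent w i + d) := by
  simp [ascSet, Finset.mem_filter, Finset.mem_Icc, and_assoc]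

lemma mem_ascSet_append (d c : ℕ) (w : List ℕ) (i : ℕ) :
    i ∈ ascSet d (w ++ [c]) ↔
      (i ∈ ascSet d w ∨ (i = w.length + 1 ∧ (w.length = 0 ∨ ent w w.length < c + d))) := by
  constructor
  · intro h
    rw [mem_ascSet] at h
    obtain ⟨h1, h2, h3⟩ := h
    simp only [List.length_append, List.length_singleton] at h2
    by_cases hi : i = w.length + 1
    · subst hi
      right
      refine ⟨rfl, ?_⟩
      by_cases h0 : w.length = 0
      · exact Or.inl h0
      · right
        rcases h3 with h3 | h3
        · exact absurd h3 (by omega)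
        · simp only [Nat.add_sub_cancel, ent_append_last] at h3
          rwa [ent_append w c w.length (by omega) le_rfl] at h3
    · have h2' : i ≤ w.length := by omega
      left
      rw [mem_ascSet]
      refine ⟨h1, h2', ?_⟩
      by_cases hone : i = 1
      · exact Or.inl hone
      · rcases h3 with h3 | h3
        · exact Or.inl h3
        · right
          rwa [ent_append w c i h1 h2', ent_append w c (i-1) (by omega) (by omega)] at h3
  · intro h
    rw [mem_ascSet]
    rcases h with h | ⟨hi, hcond⟩
    · rw [mem_ascSet] at h
      obtain ⟨h1, h2, h3⟩ := h
      refine ⟨h1, by simp only [List.length_append, List.length_singleton]; omega, ?_⟩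
      by_cases hone : i = 1
      · exact Or.inl hone
      · rcases h3 with h3 | h3
        · exact Or.inl h3
        · right
          rwa [ent_append w c i h1 h2, ent_append w c (i-1) (by omega) (by omega)]
    · subst hi
      refine ⟨by omega, by simp [List.length_append], ?_⟩
      by_cases h0 : w.length = 0
      · exact Or.inl (by omega)
      · rcases hcond with h' | hlt
        · exact absurd h' h0
        · right
          simp only [Nat.add_sub_cancel]
          rw [ent_append_last, ent_append w c w.length (by omega) le_rfl]
          exact hlt

lemma not_mem_ascSet_top (d : ℕ) (w : List ℕ) : w.length + 1 ∉ ascSet d w := by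
  rw [mem_ascSet]; omega

lemma sort_insert_top {s : Finset ℕ} {a : ℕ} (h : ∀ b ∈ s, b < a) :
    (insert a s).sort (· ≤ ·) = s.sort (· ≤ ·) ++ [a] := by
  have ha : a ∉ s := fun hc => absurd (h a hc) (lt_irrefl a)
  have hperm : ((insert a s).sort (· ≤ ·)).Perm (s.sort (· ≤ ·) ++ [a]) :=
    ((Finset.sort_perm_toList _ _).trans
      ((Finset.toList_insert ha).trans
        (List.Perm.cons a (Finset.sort_perm_toList s (· ≤ ·)).symm))).trans
      (List.perm_append_singleton _ _).symm
  refine List.Perm.eq_of_pairwise' (r := (· ≤ ·)) (Finset.pairwise_sort _ _) ?_ hperm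
  refine List.pairwise_append.2 ⟨Finset.pairwise_sort _ _, List.pairwise_singleton _ _, ?_⟩
  intro x hx y hy
  simp only [List.mem_singleton] at hy
  subst hy
  exact le_of_lt (h x ((Finset.mem_sort _).1 hx))

lemma foldl_Mstep_length : ∀ (l : List ℕ) (w : List ℕ),
    (List.foldl Mstep w l).length = w.length := by
  intro l
  induction l with
  | nil => intro w; rfl
  | cons j t ih => intro w; rw [List.foldl_cons, ih, Mstep_length]

lemma foldl_Mstep_append (c : ℕ) : ∀ (l : List ℕ) (w : List ℕ),
    (∀ j ∈ l, 1 ≤ j ∧ j ≤ w.length) →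
    List.foldl Mstep (w ++ [c]) l = List.foldl Mstep w l ++ [c] := by
  intro l
  induction l with
  | nil => intro w _; rfl
  | cons j t ih =>
    intro w h
    rw [List.foldl_cons, List.foldl_cons,
      Mstep_append w c j (h j List.mem_cons_self).1 (h j List.mem_cons_self).2,
      ih (Mstep w j)]
    intro j' hj'
    rw [Mstep_length]
    exact h j' (List.mem_cons_of_mem _ hj')

lemma hatd_nil (d : ℕ) : hatd d [] = [] := by
  have h : ascSet d [] = ∅ := by
    ext i
    rw [mem_ascSet]
    simp only [List.length_nil, Finset.notMem_empty, iff_false]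
    rintro ⟨h1, h2, -⟩
    omega
  rw [hatd, h, Finset.sort_empty, List.foldl_nil]

lemma hatd_length (d : ℕ) (w : List ℕ) : (hatd d w).length = w.length :=
  foldl_Mstep_length _ _

lemma hatd_append (d c : ℕ) (w : List ℕ) :
    hatd d (w ++ [c]) = if (w.length = 0 ∨ ent w w.length < c + d) then
      Mstep (hatd d w ++ [c]) (w.length + 1) else hatd d w ++ [c] := by
  have hsub : ∀ j ∈ (ascSet d w).sort (· ≤ ·), 1 ≤ j ∧ j ≤ w.length := by
    intro j hj
    have := (mem_ascSet d w j).1 ((Finset.mem_sort _).1 hj)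
    exact ⟨this.1, this.2.1⟩
  have hset : ascSet d (w ++ [c]) = if (w.length = 0 ∨ ent w w.length < c + d) then
      insert (w.length + 1) (ascSet d w) else ascSet d w := by
    split_ifs with hc
    · ext i
      rw [mem_ascSet_append, Finset.mem_insert]
      constructor
      · rintro (h | ⟨h, -⟩)
        · exact Or.inr h
        · exact Or.inl h
      · rintro (h | h)
        · exact Or.inr ⟨h, hc⟩
        · exact Or.inl h
    · ext i
      rw [mem_ascSet_append]
      constructor
      · rintro (h | ⟨-, h⟩)
        · exact h
        · exact absurd h hc
      · exact Or.inl
  unfold hatd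
  rw [hset]
  split_ifs with hc
  · rw [sort_insert_top (fun b hb => by
      have := (mem_ascSet d w b).1 hb; omega)]
    rw [List.foldl_append, foldl_Mstep_append c _ _ hsub]
    simp
  · rw [foldl_Mstep_append c _ _ hsub]


lemma ascSet_append_eq (d c : ℕ) (w : List ℕ) :
    ascSet d (w ++ [c]) = if (w.length = 0 ∨ ent w w.length < c + d) then
      insert (w.length + 1) (ascSet d w) else ascSet d w := by
  split_ifs with hc
  · ext i
    rw [mem_ascSet_append, Finset.mem_insert]
    constructor
    · rintro (h | ⟨h, -⟩)
      · exact Or.inr h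
      · exact Or.inl h
    · rintro (h | h)
      · exact Or.inr ⟨h, hc⟩
      · exact Or.inl h
  · ext i
    rw [mem_ascSet_append]
    constructor
    · rintro (h | ⟨-, h⟩)
      · exact h
      · exact absurd h hc
    · exact Or.inl

lemma ascSet_nil (d : ℕ) : ascSet d [] = ∅ := by
  ext i
  rw [mem_ascSet]
  simp only [List.length_nil, Finset.notMem_empty, iff_false]
  rintro ⟨h1, h2, -⟩
  omega

noncomputable def cnt (x : List ℕ) (i : ℕ) : ℕ :=
  ((nubSet x).filter fun j => i < j ∧ ent x j < ent x i).card

lemma mem_nubSet (x : List ℕ) (i : ℕ) :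
    i ∈ nubSet x ↔ 1 ≤ i ∧ i ≤ x.length ∧
      ∀ j, 1 ≤ j → j ≤ x.length → ent x j = ent x i → i ≤ j := by
  simp [nubSet, Finset.mem_filter, Finset.mem_Icc, and_assoc]

lemma ent_take (w : List ℕ) (m j : ℕ) (h1 : 1 ≤ j) (h2 : j ≤ m) (h3 : m ≤ w.length) :
    ent (w.take m) j = ent w j := by
  have ht : j - 1 < (w.take m).length := by rw [List.length_take]; omega
  rw [ent, ent, List.getD_eq_getElem _ _ ht, List.getD_eq_getElem _ _ (by omega)]
  exact List.getElem_take

lemma isEndo_of_isInvSeq {w : List ℕ} (h : IsInvSeq w) : IsEndo w := by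
  intro x hx
  obtain ⟨i, hi, rfl⟩ := List.mem_iff_getElem.1 hx
  have he : ent w (i + 1) = w[i] := by
    rw [ent, Nat.add_sub_cancel, List.getD_eq_getElem _ _ hi]
  have := h (i + 1) (Finset.mem_Icc.2 ⟨by omega, by omega⟩)
  rw [he] at this
  omega

lemma ascSet_mono {d d' : ℕ} (h : d ≤ d') (w : List ℕ) : ascSet d w ⊆ ascSet d' w := by
  intro i hi
  simp only [ascSet, Finset.mem_filter] at hi ⊢
  refine ⟨hi.1, ?_⟩
  rcases hi.2 with h1 | h1
  · exact Or.inl h1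
  · exact Or.inr (by omega)

lemma isDAscSeq_mono {d d' : ℕ} {w : List ℕ} (h : d ≤ d') (hw : IsDAscSeq d w) :
    IsDAscSeq d' w := by
  refine ⟨hw.1, fun i hi => (hw.2 i hi).trans ?_⟩
  exact Nat.add_le_add_left (Finset.card_le_card (ascSet_mono h _)) 1

lemma isDAscSeq_length {w : List ℕ} (h : IsInvSeq w) : IsDAscSeq w.length w := by
  refine ⟨isEndo_of_isInvSeq h, fun i hi => ?_⟩
  rw [Finset.mem_Icc] at hi
  have hasc : ascSet w.length (w.take (i - 1)) = Finset.Icc 1 (i - 1) := by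
    ext j
    simp only [ascSet, Finset.mem_filter, Finset.mem_Icc, List.length_take]
    have hlt : min (i-1) w.length = i - 1 := by omega
    rw [hlt]
    constructor
    · rintro ⟨hj, -⟩; exact hj
    · rintro ⟨hj1, hj2⟩
      refine ⟨⟨hj1, hj2⟩, ?_⟩
      by_cases hone : j = 1
      · exact Or.inl hone
      · right
        rw [ent_take w (i-1) j hj1 hj2 (by omega), ent_take w (i-1) (j-1) (by omega) (by omega) (by omega)]
        have hj' := h j (Finset.mem_Icc.2 ⟨hj1, by omega⟩)
        have hj1' := h (j-1) (Finset.mem_Icc.2 ⟨by omega, by omega⟩)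
        omega
  rw [ascCard, hasc, Nat.card_Icc]
  have := h i (Finset.mem_Icc.2 hi)
  omega

lemma ent_Mstep (w : List ℕ) (j i : ℕ) (h1 : 1 ≤ i) (h2 : i ≤ w.length) :
    ent (Mstep w j) i = if i < j ∧ ent w j ≤ ent w i then ent w i + 1 else ent w i := by
  have hi : i - 1 < w.length := by omega
  have hi' : i - 1 < (Mstep w j).length := by rw [Mstep_length]; omega
  have e1 : ent w i = w[i-1] := List.getD_eq_getElem _ _ hi
  have e2 : ent (Mstep w j) i = (Mstep w j)[i-1] := List.getD_eq_getElem _ _ hi'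
  rw [e2]
  simp only [Mstep, List.getElem_mapIdx]
  have h3 : i - 1 + 1 = i := by omega
  rw [h3, ← e1]

lemma main_lemma (d : ℕ) : ∀ (w : List ℕ), IsInvSeq w → IsDAscSeq d w →
    (hatd d w).length = w.length ∧
    (∀ v, 1 ≤ v → v ≤ ascCard d w → ∃ p, 1 ≤ p ∧ p ≤ w.length ∧ ent (hatd d w) p = v) ∧
    (∀ i, 1 ≤ i → i ≤ w.length → ent (hatd d w) i = ent w i + cnt (hatd d w) i) ∧
    (w ≠ [] → ent w w.length ≤ ascCard d w) := by
  intro w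
  induction w using List.reverseRecOn with
  | nil =>
    intro _ _
    refine ⟨by rw [hatd_nil], fun v hv1 hv2 => ?_, fun i h1 h2 => ?_, fun h => absurd rfl h⟩
    · rw [ascCard, ascSet_nil, Finset.card_empty] at hv2
      omega
    · simp only [List.length_nil] at h2
      omega
  | append_singleton w c ih =>
    intro huinv hudas
    have hulen : (w ++ [c]).length = w.length + 1 := by
      rw [List.length_append, List.length_singleton]
    have hwinv : IsInvSeq w := by
      intro i hi
      rw [Finset.mem_Icc] at hi
      have := huinv i (Finset.mem_Icc.2 ⟨hi.1, by omega⟩)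
      rwa [ent_append w c i hi.1 hi.2] at this
    have hwdas : IsDAscSeq d w := by
      refine ⟨isEndo_of_isInvSeq hwinv, fun i hi => ?_⟩
      rw [Finset.mem_Icc] at hi
      have h2 := hudas.2 i (Finset.mem_Icc.2 ⟨hi.1, by omega⟩)
      rwa [ent_append w c i hi.1 hi.2, List.take_append_of_le_length (by omega)] at h2
    obtain ⟨hlen, hvals, hent, hlast⟩ := ih hwinv hwdas
    have hcpos : 1 ≤ c := by
      have := huinv (w.length + 1) (Finset.mem_Icc.2 ⟨by omega, by omega⟩)
      rw [ent_append_last] at this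
      exact this.1
    have hcle : c ≤ 1 + ascCard d w := by
      have h2 := hudas.2 (w.length + 1) (Finset.mem_Icc.2 ⟨by omega, by omega⟩)
      rwa [ent_append_last, Nat.add_sub_cancel, List.take_left] at h2
    have hKu : ascCard d (w ++ [c]) = if (w.length = 0 ∨ ent w w.length < c + d) then
        ascCard d w + 1 else ascCard d w := by
      rw [ascCard, ascSet_append_eq]
      split_ifs
      · rw [Finset.card_insert_of_notMem (not_mem_ascSet_top d w)]
        rfl
      · rfl
    by_cases hc : (w.length = 0 ∨ ent w w.length < c + d)
    · -- Case B : ascent at the last position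
      have hx : hatd d (w ++ [c]) = Mstep (hatd d w ++ [c]) (w.length + 1) := by
        rw [hatd_append, if_pos hc]
      set y := hatd d w with hy
      set x := hatd d (w ++ [c]) with hxdef
      have hzlen : (y ++ [c]).length = w.length + 1 := by
        rw [List.length_append, hlen, List.length_singleton]
      have hxlen : x.length = w.length + 1 := by
        rw [hx, Mstep_length, hzlen]
      have hzent : ∀ i, 1 ≤ i → i ≤ w.length → ent (y ++ [c]) i = ent y i := by
        intro i h1 h2
        exact ent_append y c i h1 (by omega)
      have hzlast : ent (y ++ [c]) (w.length + 1) = c := by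
        have := ent_append_last y c
        rwa [hlen] at this
      have hxent : ∀ i, 1 ≤ i → i ≤ w.length →
          ent x i = if c ≤ ent y i then ent y i + 1 else ent y i := by
        intro i h1 h2
        rw [hx, ent_Mstep _ _ i h1 (by omega), hzlast, hzent i h1 h2]
        have hi : i < w.length + 1 := by omega
        simp only [hi, true_and]
      have hxlast : ent x (w.length + 1) = c := by
        rw [hx, ent_Mstep _ _ _ (by omega) (by omega), hzlast]
        have : ¬ (w.length + 1 < w.length + 1 ∧ c ≤ c) := by omega
        rw [if_neg this]
      have hfinj : ∀ a b : ℕ,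
          ((if c ≤ a then a + 1 else a) = (if c ≤ b then b + 1 else b)) ↔ a = b := by
        intro a b; split_ifs <;> omega
      have hfmono : ∀ a b : ℕ,
          ((if c ≤ a then a + 1 else a) < (if c ≤ b then b + 1 else b)) ↔ a < b := by
        intro a b; split_ifs <;> omega
      have hfnec : ∀ a : ℕ, (if c ≤ a then a + 1 else a) ≠ c := by
        intro a; split_ifs <;> omega
      have hnub : ∀ j, 1 ≤ j → j ≤ w.length → (j ∈ nubSet x ↔ j ∈ nubSet y) := by
        intro j h1 h2
        rw [mem_nubSet, mem_nubSet, hxlen, hlen]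
        constructor
        · rintro ⟨-, -, hall⟩
          refine ⟨h1, h2, fun j' hj1 hj2 hequ => ?_⟩
          apply hall j' hj1 (by omega)
          rw [hxent j' hj1 hj2, hxent j h1 h2, hfinj]
          exact hequ
        · rintro ⟨-, -, hall⟩
          refine ⟨h1, by omega, fun j' hj1 hj2 hequ => ?_⟩
          by_cases hj'top : j' = w.length + 1
          · omega
          · apply hall j' hj1 (by omega)
            rwa [hxent j' hj1 (by omega), hxent j h1 h2, hfinj] at hequ
      have hnubtop : (w.length + 1) ∈ nubSet x := by
        rw [mem_nubSet, hxlen]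
        refine ⟨by omega, le_rfl, fun j' hj1 hj2 hequ => ?_⟩
        by_cases hj'top : j' = w.length + 1
        · omega
        · exfalso
          rw [hxlast, hxent j' hj1 (by omega)] at hequ
          exact hfnec _ hequ
      have hcnt : ∀ i, 1 ≤ i → i ≤ w.length →
          cnt x i = cnt y i + (if c < ent x i then 1 else 0) := by
        intro i h1 h2
        have hfe : ((nubSet x).filter fun j => i < j ∧ ent x j < ent x i)
            = (if c < ent x i then
                insert (w.length + 1) ((nubSet y).filter fun j => i < j ∧ ent y j < ent y i)
              else ((nubSet y).filter fun j => i < j ∧ ent y j < ent y i)) := by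
          ext j
          constructor
          · intro hj
            rw [Finset.mem_filter] at hj
            obtain ⟨hjn, hij, hlt⟩ := hj
            have hjb := (mem_nubSet x j).1 hjn
            rw [hxlen] at hjb
            by_cases hjtop : j = w.length + 1
            · subst hjtop
              rw [hxlast] at hlt
              rw [if_pos hlt]
              exact Finset.mem_insert_self _ _
            · have hjn' : j ≤ w.length := by omega
              have hyj : j ∈ (nubSet y).filter fun j => i < j ∧ ent y j < ent y i := by
                refine Finset.mem_filter.2 ⟨(hnub j hjb.1 hjn').1 hjn, hij, ?_⟩
                rwa [hxent j hjb.1 hjn', hxent i h1 h2, hfmono] at hlt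
              split_ifs
              · exact Finset.mem_insert_of_mem hyj
              · exact hyj
          · intro hj
            split_ifs at hj with hci
            · rcases Finset.mem_insert.1 hj with rfl | hj'
              · refine Finset.mem_filter.2 ⟨hnubtop, by omega, ?_⟩
                rw [hxlast]; exact hci
              · obtain ⟨hjn, hij, hlt⟩ := Finset.mem_filter.1 hj'
                have hjb := (mem_nubSet y j).1 hjn
                rw [hlen] at hjb
                refine Finset.mem_filter.2 ⟨(hnub j hjb.1 hjb.2.1).2 hjn, hij, ?_⟩
                rw [hxent j hjb.1 hjb.2.1, hxent i h1 h2, hfmono]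
                exact hlt
            · obtain ⟨hjn, hij, hlt⟩ := Finset.mem_filter.1 hj
              have hjb := (mem_nubSet y j).1 hjn
              rw [hlen] at hjb
              refine Finset.mem_filter.2 ⟨(hnub j hjb.1 hjb.2.1).2 hjn, hij, ?_⟩
              rw [hxent j hjb.1 hjb.2.1, hxent i h1 h2, hfmono]
              exact hlt
        rw [cnt, cnt, hfe]
        split_ifs with hci
        · rw [Finset.card_insert_of_notMem]
          intro hmem
          have := (mem_nubSet y _).1 (Finset.mem_filter.1 hmem).1
          rw [hlen] at this
          omega
        · rfl
      have hcnttop : cnt x (w.length + 1) = 0 := by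
        rw [cnt, Finset.card_eq_zero, Finset.filter_eq_empty_iff]
        intro j hj
        have := (mem_nubSet x j).1 hj
        rw [hxlen] at this
        intro hcon
        omega
      refine ⟨by rw [hxlen, hulen], ?_, ?_, ?_⟩
      · intro v hv1 hv2
        rw [hKu, if_pos hc] at hv2
        rcases lt_trichotomy v c with hvc | hvc | hvc
        · obtain ⟨p, hp1, hp2, hp3⟩ := hvals v hv1 (by omega)
          refine ⟨p, hp1, by omega, ?_⟩
          rw [hxent p hp1 hp2, hp3, if_neg (by omega)]
        · exact ⟨w.length + 1, by omega, by omega, by rw [hxlast, hvc]⟩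
        · obtain ⟨p, hp1, hp2, hp3⟩ := hvals (v - 1) (by omega) (by omega)
          refine ⟨p, hp1, by omega, ?_⟩
          rw [hxent p hp1 hp2, hp3, if_pos (by omega)]
          omega
      · intro i h1 h2
        rw [hulen] at h2
        by_cases htop : i = w.length + 1
        · subst htop
          rw [hxlast, ent_append_last, hcnttop]
          omega
        · have h2' : i ≤ w.length := by omega
          have e1 := hxent i h1 h2'
          have e2 := hcnt i h1 h2'
          have e3 := hent i h1 h2'
          rw [ent_append w c i h1 h2']
          by_cases hcy : c ≤ ent y i
          · rw [if_pos hcy] at e1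
            have hcx : c < ent x i := by omega
            rw [if_pos hcx] at e2
            omega
          · rw [if_neg hcy] at e1
            have hcx : ¬ c < ent x i := by omega
            rw [if_neg hcx] at e2
            omega
      · intro _
        rw [hulen, ent_append_last, hKu, if_pos hc]
        omega
    · -- Case A : no ascent at the last position
      push_neg at hc
      obtain ⟨hn0, hcd⟩ := hc
      have hwne : w ≠ [] := by
        intro h0
        rw [h0] at hn0
        exact hn0 rfl
      have hnpos : 1 ≤ w.length := by
        cases w with
        | nil => exact absurd rfl hwne
        | cons a t => simp
      have hx : hatd d (w ++ [c]) = hatd d w ++ [c] := by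
        rw [hatd_append, if_neg (by push_neg; exact ⟨hn0, hcd⟩)]
      set y := hatd d w with hy
      set x := hatd d (w ++ [c]) with hxdef
      have hxlen : x.length = w.length + 1 := by
        rw [hx, List.length_append, hlen, List.length_singleton]
      have hxent : ∀ i, 1 ≤ i → i ≤ w.length → ent x i = ent y i := by
        intro i h1 h2
        rw [hx]
        exact ent_append y c i h1 (by omega)
      have hxlast : ent x (w.length + 1) = c := by
        rw [hx]
        have := ent_append_last y c
        rwa [hlen] at this
      have hcK : c ≤ ascCard d w := le_trans (by omega) (hlast hwne)
      obtain ⟨p, hp1, hp2, hp3⟩ := hvals c hcpos hcK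
      have hnotnubtop : (w.length + 1) ∉ nubSet x := by
        rw [mem_nubSet]
        rintro ⟨-, -, hall⟩
        have := hall p hp1 (by omega) (by rw [hxent p hp1 hp2, hp3, hxlast])
        omega
      have hnub : ∀ j, 1 ≤ j → j ≤ w.length → (j ∈ nubSet x ↔ j ∈ nubSet y) := by
        intro j h1 h2
        rw [mem_nubSet, mem_nubSet, hxlen, hlen]
        constructor
        · rintro ⟨-, -, hall⟩
          refine ⟨h1, h2, fun j' hj1 hj2 hequ => ?_⟩
          apply hall j' hj1 (by omega)
          rwa [hxent j' hj1 hj2, hxent j h1 h2]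
        · rintro ⟨-, -, hall⟩
          refine ⟨h1, by omega, fun j' hj1 hj2 hequ => ?_⟩
          by_cases hj'top : j' = w.length + 1
          · omega
          · apply hall j' hj1 (by omega)
            rwa [hxent j' hj1 (by omega), hxent j h1 h2] at hequ
      have hcnt : ∀ i, 1 ≤ i → i ≤ w.length → cnt x i = cnt y i := by
        intro i h1 h2
        rw [cnt, cnt]
        congr 1
        ext j
        rw [Finset.mem_filter, Finset.mem_filter]
        constructor
        · rintro ⟨hjn, hij, hlt⟩
          have hjb := (mem_nubSet x j).1 hjn
          rw [hxlen] at hjb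
          by_cases hjtop : j = w.length + 1
          · exact absurd (hjtop ▸ hjn) hnotnubtop
          · have hjn' : j ≤ w.length := by omega
            exact ⟨(hnub j hjb.1 hjn').1 hjn, hij,
              by rwa [hxent j hjb.1 hjn', hxent i h1 h2] at hlt⟩
        · rintro ⟨hjn, hij, hlt⟩
          have hjb := (mem_nubSet y j).1 hjn
          rw [hlen] at hjb
          exact ⟨(hnub j hjb.1 hjb.2.1).2 hjn, hij,
            by rwa [hxent j hjb.1 hjb.2.1, hxent i h1 h2]⟩
      have hcnttop : cnt x (w.length + 1) = 0 := by
        rw [cnt, Finset.card_eq_zero, Finset.filter_eq_empty_iff]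
        intro j hj
        have := (mem_nubSet x j).1 hj
        rw [hxlen] at this
        intro hcon
        omega
      refine ⟨by rw [hxlen, hulen], ?_, ?_, ?_⟩
      · intro v hv1 hv2
        rw [hKu, if_neg (by push_neg; exact ⟨hn0, hcd⟩)] at hv2
        obtain ⟨q, hq1, hq2, hq3⟩ := hvals v hv1 hv2
        exact ⟨q, hq1, by omega, by rw [hxent q hq1 hq2]; exact hq3⟩
      · intro i h1 h2
        rw [hulen] at h2
        by_cases htop : i = w.length + 1
        · subst htop
          rw [hxlast, ent_append_last, hcnttop]
          omega
        · have h2' : i ≤ w.length := by omega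
          rw [ent_append w c i h1 h2', hxent i h1 h2', hcnt i h1 h2']
          exact hent i h1 h2'
      · intro _
        rw [hulen, ent_append_last, hKu, if_neg (by push_neg; exact ⟨hn0, hcd⟩)]
        exact hcK

lemma isDAscSeq_of_mind_le {a : List ℕ} {d : ℕ} (ha : IsInvSeq a) (hd : mind a ≤ d) :
    IsDAscSeq d a := by
  have hne : {d' | IsDAscSeq d' a}.Nonempty := ⟨a.length, isDAscSeq_length ha⟩
  have hmem : IsDAscSeq (mind a) a := Nat.sInf_mem hne
  exact isDAscSeq_mono hd hmem

/-- if `α` and `σ` are inversion sequences with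
`H(α) ∩ H(σ) ≠ ∅`, then `α = σ`. -/
theorem stmt8 (a s : List ℕ) (ha : IsInvSeq a) (hs : IsInvSeq s)
    (h : (Hset a ∩ Hset s).Nonempty) : a = s := by
  obtain ⟨x, ⟨d1, hd1, hx1⟩, ⟨d2, hd2, hx2⟩⟩ := h
  have hda := isDAscSeq_of_mind_le ha hd1
  have hds := isDAscSeq_of_mind_le hs hd2
  obtain ⟨hla, -, hea, -⟩ := main_lemma d1 a ha hda
  obtain ⟨hls, -, hes, -⟩ := main_lemma d2 s hs hds
  rw [← hx1] at hla hea
  rw [← hx2] at hls hes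
  have hlen : a.length = s.length := by rw [← hla, ← hls]
  apply List.ext_getElem hlen
  intro i h1 h2
  have e1 := hea (i + 1) (by omega) (by omega)
  have e2 := hes (i + 1) (by omega) (by omega)
  have he : ent a (i + 1) = ent s (i + 1) := by omega
  rw [ent, ent, Nat.add_sub_cancel] at he
  rw [List.getD_eq_getElem _ _ h1, List.getD_eq_getElem _ _ h2] at he
  exact he
end

section
/- Let α = a_1⋯a_n be an endofunction with n ≥ 1 and write α = βa_n with β = a_1⋯a_{n−1}. Then rlMinP(α) is the disjoint union of rlMinP(a_1⋯a_k) and {(n, a_n)}, where k ≥ 1 is the largest right-left minimum index of β such that a_k < a_n; if no such index exists then k = 0 and rlMinP(a_1⋯a_k) = ∅. -/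
theorem ent_take' (w : List ℕ) (k i : ℕ) (h1 : 1 ≤ i) (h : i ≤ k) :
    ent (w.take k) i = ent w i := by
  unfold ent
  rw [List.getD_eq_getElem?_getD, List.getD_eq_getElem?_getD, List.getElem?_take,
    if_pos (by omega : i - 1 < k)]

/-- for an endofunction `α = β a_n` of length `n ≥ 1`,
`rlMinP(α)` is the disjoint union of `rlMinP(a_1 ⋯ a_k)` and `{(n, a_n)}`,
where `k` is the largest right-left minimum index of `β` with `a_k < a_n`
(`k = 0`, giving `rlMinP(ε) = ∅`, if no such index exists). -/
theorem stmt10 (w : List ℕ) (hw : IsEndo w) (hn : 1 ≤ w.length) (k : ℕ)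
    (hk : (IsRLMinIdx (w.take (w.length - 1)) k ∧
            ent w k < ent w w.length ∧
            (∀ i : ℕ, IsRLMinIdx (w.take (w.length - 1)) i →
              ent w i < ent w w.length → i ≤ k))
        ∨ (k = 0 ∧ ∀ i : ℕ, IsRLMinIdx (w.take (w.length - 1)) i →
              ¬ ent w i < ent w w.length)) :
    rlMinP w = rlMinP (w.take k) ∪ {(w.length, ent w w.length)} ∧
    (w.length, ent w w.length) ∉ rlMinP (w.take k) := by
  set n := w.length with hnw
  have hlen : ∀ m : ℕ, (w.take m).length = min m n := fun m => List.length_take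
  constructor
  · ext ⟨i, v⟩
    simp only [rlMinP, IsRLMinIdx, Set.mem_union, Set.mem_setOf_eq,
      Set.mem_singleton_iff, Prod.mk.injEq]
    constructor
    · rintro ⟨⟨hi1, hi2, himin⟩, hv⟩
      rcases eq_or_lt_of_le hi2 with heq | hlt
      · right; exact ⟨heq, by rw [hv, heq]⟩
      · -- i < n, so i is a RL-min index of β with ent w i < ent w n
        have hirl : IsRLMinIdx (w.take (n - 1)) i := by
          refine ⟨hi1, by rw [hlen]; omega, fun j hj1 hj2 => ?_⟩
          rw [hlen] at hj2
          rw [ent_take' w (n-1) i hi1 (by omega), ent_take' w (n-1) j (by omega) (by omega)]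
          exact himin j hj1 (by omega)
        have hia : ent w i < ent w n := himin n hlt le_rfl
        rcases hk with ⟨⟨hk1, hk2, hkmin⟩, hka, hkmax⟩ | ⟨hk0, hknone⟩
        · have hik : i ≤ k := hkmax i hirl hia
          rw [hlen] at hk2
          left
          refine ⟨⟨hi1, by rw [hlen]; omega, fun j hj1 hj2 => ?_⟩, ?_⟩
          · rw [hlen] at hj2
            rw [ent_take' w k i hi1 (by omega), ent_take' w k j (by omega) (by omega)]
            exact himin j hj1 (by omega)
          · rw [hv, ent_take' w k i hi1 hik]
        · exact absurd hia (hknone i hirl)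
    · rintro (⟨⟨hi1, hi2, himin⟩, hv⟩ | ⟨hi, hv⟩)
      · rw [hlen] at hi2
        rcases hk with ⟨⟨hk1, hk2, hkmin⟩, hka, hkmax⟩ | ⟨hk0, hknone⟩
        · rw [hlen] at hk2
          have hik : i ≤ k := by omega
          have hikk : ent w i ≤ ent w k := by
            rcases eq_or_lt_of_le hik with h | h
            · rw [h]
            · have := himin k h (by rw [hlen]; omega)
              rw [ent_take' w k i hi1 hik, ent_take' w k k hk1 le_rfl] at this
              omega
          refine ⟨⟨hi1, by omega, fun j hj1 hj2 => ?_⟩, ?_⟩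
          · rcases le_or_gt j k with hjk | hjk
            · have := himin j hj1 (by rw [hlen]; omega)
              rwa [ent_take' w k i hi1 hik, ent_take' w k j (by omega) hjk] at this
            · have hkj : ent w k < ent w j := by
                rcases eq_or_lt_of_le hj2 with h | h
                · rw [h]; exact hka
                · have := hkmin j hjk (by rw [hlen]; omega)
                  rwa [ent_take' w (n-1) k hk1 (by omega),
                    ent_take' w (n-1) j (by omega) (by omega)] at this
              omega
          · rw [hv, ent_take' w k i hi1 hik]
        · omega
      · refine ⟨⟨by omega, by omega, fun j hj1 hj2 => by omega⟩, by rw [hv, hi]⟩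
  · rintro ⟨⟨h1, h2, _⟩, _⟩
    rw [hlen] at h2
    rcases hk with ⟨⟨hk1, hk2, _⟩, _, _⟩ | ⟨hk0, _⟩
    · rw [hlen] at hk2; omega
    · omega
end
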